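/- Let n ≥ k ≥ 1 and p ≥ 1 be such that A(q) = [n choose k]_q · (1 − q)/(1 − q^p) is a polynomial. Then the sum of the absolute values of the coefficients of A equals (1/p)·C(n,k), where C(n,k) is the ordinary binomial coefficient. Consequently, the ℓ¹-norm of the coefficient sequence of [n choose k]_q · (1 − q) is at most (2/p)·C(n,k). -/

import Mathlib

open scoped BigOperators
open Polynomial

/-- The Gaussian (q-)binomial coefficient as a polynomial in `q`. -/
noncomputable def gaussBinom : ℕ → ℕ → Polynomial ℤ
  | _, 0 => 1
  | 0, _ + 1 => 0
  | n + 1, k + 1 => gaussBinom n k + Polynomial.X ^ (k + 1) * gaussBinom n (k + 1)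

/-- The ℓ¹-norm of an integer polynomial: the sum of the absolute values of its
coefficients. -/
noncomputable def l1normP (P : Polynomial ℤ) : ℤ := ∑ j ∈ P.support, |P.coeff j|

/-!
Up to the factor `q ^ (k choose 2)`, `[n choose k]_q` is the generating function of the sums of
the `k`-subsets of `{0, …, n - 1}`. On the space spanned by these subsets, moving one element up
by one (`E`), or down from `i` to `i - 1` with weight `i (n - i)` (`F`), gives operators with
`E F - F E = 2σ - k (n - 1)` on the subsets of sum `σ`. The usual `sl₂` argument makes `E`
injective below the middle weight and `F` injective above it, so the coefficients of
`[n choose k]_q` increase up to `k (n - k) / 2` and decrease afterwards. Hence the coefficients of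
`[n choose k]_q (1 - q)` are nonnegative up to the peak and nonpositive after it, and this forces
`A = [n choose k]_q (1 - q) / (1 - q ^ p)` to have nonnegative coefficients. So `‖A‖₁ = A(1)`, and
`A(1) = C(n, k) / p` because `A (1 + q + ⋯ + q ^ (p - 1)) = [n choose k]_q`. Finally
`[n choose k]_q (1 - q) = A - q ^ p A`.
-/

open Finset

namespace Polynomial

section Semiring

variable {R : Type*} [Semiring R]

theorem support_mul_X_pow (P : R[X]) (m : ℕ) :
    (P * X ^ m).support = P.support.map (addRightEmbedding m) := by
  ext j
  simp only [mem_support_iff, mem_map, coeff_mul_X_pow', addRightEmbedding_apply]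
  constructor
  · intro h
    split_ifs at h with hj
    · exact ⟨j - m, h, Nat.sub_add_cancel hj⟩
    · exact absurd rfl h
  · rintro ⟨i, hi, rfl⟩
    simpa using hi

end Semiring

section CommRing

variable {R : Type*} [CommRing R]

theorem coeff_mul_one_sub_X_zero (P : R[X]) : (P * (1 - X)).coeff 0 = P.coeff 0 := by
  simp [mul_sub]

theorem coeff_mul_one_sub_X_succ (P : R[X]) (m : ℕ) :
    (P * (1 - X)).coeff (m + 1) = P.coeff (m + 1) - P.coeff m := by
  simp [mul_sub]

theorem coeff_eq_of_mul_one_sub_X_pow_of_lt {A D : R[X]} {p m : ℕ} (h : A * (1 - X ^ p) = D)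
    (hm : m < p) : A.coeff m = D.coeff m := by
  simp [← h, mul_sub, coeff_mul_X_pow', not_le.2 hm]

theorem coeff_add_eq_of_mul_one_sub_X_pow {A D : R[X]} {p : ℕ} (h : A * (1 - X ^ p) = D)
    (m : ℕ) : A.coeff (m + p) = D.coeff (m + p) + A.coeff m := by
  simp [← h, mul_sub]

variable [PartialOrder R] [IsOrderedRing R]

/-- Below `N` the coefficients of `A` are partial sums `D m + D (m - p) + ⋯`; above `N` they
decrease along `m, m + p, m + 2p, …` down to `0`. -/
theorem coeff_nonneg_of_mul_one_sub_X_pow {A D : R[X]} {p N : ℕ} (hp : 0 < p)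
    (h : A * (1 - X ^ p) = D) (hlow : ∀ m ≤ N, 0 ≤ D.coeff m)
    (hhigh : ∀ m, N < m → D.coeff m ≤ 0) (m : ℕ) : 0 ≤ A.coeff m := by
  rcases le_or_gt m N with hm | hm
  · induction m using Nat.strong_induction_on with
    | _ m ih =>
      rcases lt_or_ge m p with hmp | hmp
      · exact coeff_eq_of_mul_one_sub_X_pow_of_lt h hmp ▸ hlow m hm
      · obtain ⟨m, rfl⟩ := Nat.exists_eq_add_of_le' hmp
        rw [coeff_add_eq_of_mul_one_sub_X_pow h]
        exact add_nonneg (hlow _ hm) (ih m (by omega) (by omega))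
  · have hanti : Antitone fun t : ℕ => A.coeff (m + t * p) := by
      refine antitone_nat_of_succ_le fun t => ?_
      rw [Nat.succ_mul, ← add_assoc, coeff_add_eq_of_mul_one_sub_X_pow h]
      exact add_le_of_nonpos_left (hhigh _ (by omega))
    have hvanish : A.coeff (m + (A.natDegree + 1) * p) = 0 :=
      coeff_eq_zero_of_natDegree_lt (by nlinarith)
    simpa [hvanish] using hanti (Nat.zero_le (A.natDegree + 1))

theorem coeff_nonneg_of_mul_one_sub_X_pow_eq_of_unimodal {A P : R[X]} {p N : ℕ} (hp : 0 < p)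
    (h : A * (1 - X ^ p) = P * (1 - X)) (h0 : 0 ≤ P.coeff 0)
    (hmono : ∀ m < N, P.coeff m ≤ P.coeff (m + 1))
    (hanti : ∀ m ≥ N, P.coeff (m + 1) ≤ P.coeff m) (m : ℕ) : 0 ≤ A.coeff m := by
  refine coeff_nonneg_of_mul_one_sub_X_pow hp h (N := N) (fun m hm => ?_) (fun m hm => ?_) m
  · obtain _ | m := m
    · rwa [coeff_mul_one_sub_X_zero]
    · rw [coeff_mul_one_sub_X_succ, sub_nonneg]
      exact hmono m (by omega)
  · obtain _ | m := m
    · omega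
    · rw [coeff_mul_one_sub_X_succ, sub_nonpos]
      exact hanti m (by omega)

end CommRing

end Polynomial

noncomputable def subsetSumPoly (n k : ℕ) : ℤ[X] :=
  ∑ S ∈ (range n).powersetCard k, X ^ (∑ i ∈ S, i)

/-- Split the `(k + 1)`-subsets of `{0, …, n}` according to whether they contain `0`, and shift
the remaining elements down by one. -/
theorem subsetSumPoly_succ_succ (n k : ℕ) :
    subsetSumPoly (n + 1) (k + 1) =
      X ^ k * subsetSumPoly n k + X ^ (k + 1) * subsetSumPoly n (k + 1) := by
  set M := (range n).map (addRightEmbedding 1)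
  have hr : range (n + 1) = insert 0 M := by
    ext (_ | i) <;> simp [M]
  have h0 : 0 ∉ M := by simp [M]
  have hsum : ∀ T : Finset ℕ, ∑ i ∈ T.map (addRightEmbedding 1), i = ∑ i ∈ T, i + T.card := by
    intro T; simp [Finset.sum_add_distrib]
  have hnot : ∀ T ∈ M.powersetCard k, 0 ∉ T := fun T hT h => h0 ((mem_powersetCard.1 hT).1 h)
  rw [subsetSumPoly, hr, powersetCard_succ_insert h0, sum_union, sum_image, powersetCard_map,
    powersetCard_map, sum_map, sum_map]
  · rw [add_comm, subsetSumPoly, subsetSumPoly, mul_sum, mul_sum]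
    congr 1 <;> refine sum_congr rfl fun T hT => ?_ <;> rw [mem_powersetCard] at hT
    · simp [hsum, hT.2]; ring
    · simp [hsum, hT.2]; ring
  · intro S hS T hT hST
    rw [← erase_insert (hnot S hS), ← erase_insert (hnot T hT)]
    exact congrArg (Finset.erase · 0) hST
  · refine disjoint_left.2 fun S hS hS' => ?_
    obtain ⟨T, -, rfl⟩ := mem_image.1 hS'
    exact h0 ((mem_powersetCard.1 hS).1 (mem_insert_self 0 T))

theorem X_pow_choose_two_mul_gaussBinom (n k : ℕ) :
    X ^ k.choose 2 * gaussBinom n k = subsetSumPoly n k := by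
  induction n generalizing k with
  | zero =>
    cases k with
    | zero => simp [gaussBinom, subsetSumPoly]
    | succ k => rw [subsetSumPoly, powersetCard_eq_empty.2 (by simp)]; simp [gaussBinom]
  | succ n ih =>
    cases k with
    | zero => simp [gaussBinom, subsetSumPoly]
    | succ k =>
      rw [subsetSumPoly_succ_succ, ← ih, ← ih, gaussBinom, Nat.choose_succ_succ,
        Nat.choose_one_right]
      ring

theorem gaussBinom_eval_one (n k : ℕ) : (gaussBinom n k).eval 1 = n.choose k := by
  induction n generalizing k with
  | zero => cases k <;> simp [gaussBinom]
  | succ n ih => cases k <;> simp [gaussBinom, ih, Nat.choose_succ_succ]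

section Sl2

variable {K V : Type*} [Field K] [AddCommGroup V] [Module K V] {E F : Module.End K V}
  {W : ℤ → Submodule K V} {c : K}

theorem lowering_pow_apply_mem (hF : ∀ σ, ∀ x ∈ W σ, F x ∈ W (σ - 1)) {σ : ℤ} {x : V}
    (hx : x ∈ W σ) (j : ℕ) : (F ^ j) x ∈ W (σ - j) := by
  induction j with
  | zero => simpa using hx
  | succ j ih => simpa [pow_succ', sub_sub] using hF _ _ ih

theorem raising_apply_lowering_pow_succ (hF : ∀ σ, ∀ x ∈ W σ, F x ∈ W (σ - 1))
    (hEF : ∀ σ, ∀ x ∈ W σ, E (F x) - F (E x) = (2 * σ - c) • x)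
    {σ : ℤ} {x : V} (hx : x ∈ W σ) (hEx : E x = 0) (j : ℕ) :
    E ((F ^ (j + 1)) x) = ((j + 1) * (2 * σ - c - j)) • (F ^ j) x := by
  have hsucc : ∀ i : ℕ, (F ^ (i + 1)) x = F ((F ^ i) x) := fun i => by
    rw [pow_succ', Module.End.mul_apply]
  induction j with
  | zero => simpa [hEx] using hEF σ x hx
  | succ j ih =>
    have h := hEF _ _ (lowering_pow_apply_mem hF hx (j + 1))
    rw [ih, map_smul, ← hsucc, sub_eq_iff_eq_add'] at h
    rw [h, ← hsucc, ← add_smul]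
    congr 1
    push_cast
    ring

variable [LinearOrder K] [IsStrictOrderedRing K]

theorem eq_zero_of_raising_eq_zero (hF : ∀ σ, ∀ x ∈ W σ, F x ∈ W (σ - 1))
    (hEF : ∀ σ, ∀ x ∈ W σ, E (F x) - F (E x) = (2 * σ - c) • x)
    (hW : ∀ σ < 0, W σ = ⊥) {σ : ℤ} (hσ : 2 * σ < c) {x : V} (hx : x ∈ W σ) (hEx : E x = 0) :
    x = 0 := by
  have hdown : ∀ j : ℕ, (F ^ (j + 1)) x = 0 → (F ^ j) x = 0 := by
    intro j hj
    have h := raising_apply_lowering_pow_succ hF hEF hx hEx j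
    rw [hj, map_zero, eq_comm, smul_eq_zero] at h
    refine h.resolve_left (mul_ne_zero (by positivity) ?_)
    have : (0 : K) ≤ j := Nat.cast_nonneg j
    linarith
  have hvanish : ∀ d j : ℕ, j + d = σ.toNat + 1 → (F ^ j) x = 0 := by
    intro d
    induction d with
    | zero =>
      intro j hj
      simpa [hW (σ - j) (by omega)] using lowering_pow_apply_mem hF hx j
    | succ d ih => exact fun j hj => hdown j (ih (j + 1) (by omega))
  simpa using hvanish _ 0 (zero_add _)

theorem finrank_le_finrank_succ_of_commutator (hE : ∀ σ, ∀ x ∈ W σ, E x ∈ W (σ + 1))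
    (hF : ∀ σ, ∀ x ∈ W σ, F x ∈ W (σ - 1))
    (hEF : ∀ σ, ∀ x ∈ W σ, E (F x) - F (E x) = (2 * σ - c) • x)
    (hW : ∀ σ < 0, W σ = ⊥) {σ : ℤ} (hσ : 2 * σ < c) [Module.Finite K (W (σ + 1))] :
    Module.finrank K (W σ) ≤ Module.finrank K (W (σ + 1)) := by
  refine LinearMap.finrank_le_finrank_of_injective (f := E.restrict (hE σ)) ?_
  refine (injective_iff_map_eq_zero _).2 fun x hx => ?_
  exact Subtype.ext (eq_zero_of_raising_eq_zero hF hEF hW hσ x.2 (congrArg Subtype.val hx))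

/-- Swap the roles of `E` and `F` and reindex the weights by `τ ↦ T - τ`. -/
theorem finrank_le_finrank_pred_of_commutator (hE : ∀ σ, ∀ x ∈ W σ, E x ∈ W (σ + 1))
    (hF : ∀ σ, ∀ x ∈ W σ, F x ∈ W (σ - 1))
    (hEF : ∀ σ, ∀ x ∈ W σ, E (F x) - F (E x) = (2 * σ - c) • x)
    {T : ℤ} (hW : ∀ σ > T, W σ = ⊥) {σ : ℤ} (hσ : c < 2 * σ) [Module.Finite K (W (σ - 1))] :
    Module.finrank K (W σ) ≤ Module.finrank K (W (σ - 1)) := by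
  have h1 : T - (T - σ) = σ := by ring
  have h2 : T - (T - σ + 1) = σ - 1 := by ring
  have : Module.Finite K (W (T - (T - σ + 1))) := by rwa [h2]
  have key := finrank_le_finrank_succ_of_commutator (E := F) (F := E) (W := fun τ => W (T - τ))
    (c := 2 * T - c)
    (fun τ x hx => by rw [show T - (τ + 1) = T - τ - 1 by ring]; exact hF _ x hx)
    (fun τ x hx => by rw [show T - (τ - 1) = T - τ + 1 by ring]; exact hE _ x hx)
    (fun τ x hx => by rw [← neg_sub, hEF _ x hx, ← neg_smul]; push_cast; ring_nf)
    (fun τ hτ => hW _ (by omega)) (σ := T - σ) (by push_cast; linarith)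
  rwa [h1, h2] at key

end Sl2

section Moves

variable {α R : Type*} [DecidableEq α] [CommRing R]

noncomputable def moveOp (a b : α) : Module.End R (Finset α →₀ R) :=
  Finsupp.lsum R fun S => if a ∈ S ∧ b ∉ S then Finsupp.lsingle (insert b (S.erase a)) else 0

theorem moveOp_single (a b : α) (S : Finset α) (r : R) :
    moveOp a b (Finsupp.single S r) =
      if a ∈ S ∧ b ∉ S then Finsupp.single (insert b (S.erase a)) r else 0 := by
  simp only [moveOp, Finsupp.lsum_single]
  split_ifs <;> simp

theorem moveOp_commute {a b c d : α} (had : a ≠ d) (hbc : b ≠ c) :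
    Commute (moveOp a b : Module.End R (Finset α →₀ R)) (moveOp c d) := by
  refine Finsupp.lhom_ext fun S r => ?_
  simp only [Module.End.mul_apply, moveOp_single]
  by_cases h1 : a ∈ S <;> by_cases h2 : b ∈ S <;> by_cases h3 : c ∈ S <;> by_cases h4 : d ∈ S <;>
    simp [h1, h2, h3, h4, moveOp_single, had, hbc, had.symm, hbc.symm]
  split_ifs
  · congr 1
    ext x
    simp only [mem_insert, mem_erase]
    grind
  all_goals grind

theorem moveOp_moveOp_single {a b : α} (hab : a ≠ b) (S : Finset α) (r : R) :
    moveOp a b (moveOp b a (Finsupp.single S r)) =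
      if b ∈ S ∧ a ∉ S then Finsupp.single S r else 0 := by
  rw [moveOp_single]
  split_ifs with h
  · rw [moveOp_single, if_pos (by simp [hab, Ne.symm hab]), erase_insert (by simp [h.2]),
      insert_erase h.1]
  · simp

theorem moveOp_mem_supported {a b : α} {s t : Set (Finset α)}
    (h : ∀ S ∈ s, a ∈ S → b ∉ S → insert b (S.erase a) ∈ t) {x : Finset α →₀ R}
    (hx : x ∈ Finsupp.supported R R s) : moveOp a b x ∈ Finsupp.supported R R t := by
  have : Finsupp.supported R R s ≤ (Finsupp.supported R R t).comap (moveOp a b) := by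
    rw [Finsupp.supported_eq_span_single, Submodule.span_le]
    rintro _ ⟨S, hS, rfl⟩
    rw [SetLike.mem_coe, Submodule.mem_comap, moveOp_single]
    split_ifs with hab
    · exact Finsupp.single_mem_supported R 1 (h S hS hab.1 hab.2)
    · exact zero_mem _
  exact this hx

end Moves

noncomputable def lowerWeight (n i : ℕ) : ℚ := i * (n - i)

/-- Together with `lowerOp n`, the action of the standard `e, f ∈ sl₂` on the exterior powers of
the `n`-dimensional irreducible representation, in the basis of wedges of weight vectors indexed
by the subsets of `range n`. -/
noncomputable def raiseOp (n : ℕ) : Module.End ℚ (Finset ℕ →₀ ℚ) :=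
  ∑ j ∈ range (n - 1), moveOp j (j + 1)

noncomputable def lowerOp (n : ℕ) : Module.End ℚ (Finset ℕ →₀ ℚ) :=
  ∑ j ∈ range (n - 1), lowerWeight n (j + 1) • moveOp (j + 1) j

theorem raiseOp_mul_lowerOp_sub (n : ℕ) :
    raiseOp n * lowerOp n - lowerOp n * raiseOp n =
      ∑ j ∈ range (n - 1), lowerWeight n (j + 1) •
        (moveOp j (j + 1) * moveOp (j + 1) j - moveOp (j + 1) j * moveOp j (j + 1)) := by
  rw [raiseOp, lowerOp, sum_mul_sum, sum_mul_sum,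
    sum_comm (f := fun j i => _ * moveOp i (i + 1)), ← sum_sub_distrib]
  refine sum_congr rfl fun i hi => ?_
  rw [← sum_sub_distrib, sum_eq_single i]
  · rw [mul_smul_comm, smul_mul_assoc, smul_sub]
  · intro j _ hji
    rw [mul_smul_comm, smul_mul_assoc, (moveOp_commute (by omega) (by omega)).eq, sub_self]
  · exact fun h => absurd hi h

theorem sum_lowerWeight_mul_indicator_sub {n : ℕ} {S : Finset ℕ} (hS : S ⊆ range n) :
    ∑ j ∈ range (n - 1), lowerWeight n (j + 1) *
      ((if j + 1 ∈ S then 1 else 0) - (if j ∈ S then 1 else 0)) =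
      ∑ i ∈ S, (2 * (i : ℚ) - (n - 1)) := by
  obtain _ | m := n
  · simp [subset_empty.1 hS]
  have hsum : ∀ f : ℕ → ℚ, ∑ i ∈ range (m + 1), (if i ∈ S then f i else 0) = ∑ i ∈ S, f i :=
    fun f => by rw [sum_ite_mem, inter_eq_right.2 hS]
  have h1 : ∑ j ∈ range m, lowerWeight (m + 1) (j + 1) * (if j + 1 ∈ S then 1 else 0) =
      ∑ i ∈ S, lowerWeight (m + 1) i := by
    simp_rw [mul_ite, mul_one, mul_zero, ← hsum, sum_range_succ' _ m, lowerWeight]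
    simp
  have h2 : ∑ j ∈ range m, lowerWeight (m + 1) (j + 1) * (if j ∈ S then 1 else 0) =
      ∑ i ∈ S, lowerWeight (m + 1) (i + 1) := by
    simp_rw [mul_ite, mul_one, mul_zero, ← hsum, sum_range_succ _ m, lowerWeight]
    simp
  rw [Nat.add_sub_cancel]
  simp_rw [mul_sub, sum_sub_distrib, h1, h2, ← sum_sub_distrib, lowerWeight]
  refine sum_congr rfl fun i _ => ?_
  push_cast
  ring

def weightSubsets (n k : ℕ) (σ : ℤ) : Finset (Finset ℕ) :=
  ((range n).powersetCard k).filter fun S => ∑ i ∈ S, (i : ℤ) = σ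

noncomputable def weightSpace (n k : ℕ) (σ : ℤ) : Submodule ℚ (Finset ℕ →₀ ℚ) :=
  Finsupp.supported ℚ ℚ ↑(weightSubsets n k σ)

theorem insert_erase_mem_weightSubsets {n k : ℕ} {σ : ℤ} {S : Finset ℕ}
    (hS : S ∈ weightSubsets n k σ) {a b : ℕ} (ha : a ∈ S) (hb : b ∉ S) (hbn : b < n) :
    insert b (S.erase a) ∈ weightSubsets n k (σ - a + b) := by
  simp only [weightSubsets, mem_filter, mem_powersetCard] at hS ⊢
  obtain ⟨⟨hsub, hcard⟩, hsum⟩ := hS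
  have hb' : b ∉ S.erase a := fun h => hb (mem_of_mem_erase h)
  refine ⟨⟨insert_subset (mem_range.2 hbn) ((erase_subset a S).trans hsub), ?_⟩, ?_⟩
  · rw [card_insert_of_notMem hb', card_erase_of_mem ha, ← hcard]
    exact Nat.sub_add_cancel (card_pos.2 ⟨a, ha⟩)
  · rw [sum_insert hb', ← hsum, ← add_sum_erase S _ ha]
    ring

theorem raiseOp_mem_weightSpace {n k : ℕ} {σ : ℤ} {x : Finset ℕ →₀ ℚ}
    (hx : x ∈ weightSpace n k σ) :
    raiseOp n x ∈ weightSpace n k (σ + 1) := by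
  rw [raiseOp, LinearMap.sum_apply]
  refine Submodule.sum_mem _ fun j hj => moveOp_mem_supported (fun S hS ha hb => ?_) hx
  have := insert_erase_mem_weightSubsets hS ha hb (by simp at hj; omega)
  rwa [show σ - j + (j + 1 : ℕ) = σ + 1 by push_cast; ring] at this

theorem lowerOp_mem_weightSpace {n k : ℕ} {σ : ℤ} {x : Finset ℕ →₀ ℚ}
    (hx : x ∈ weightSpace n k σ) :
    lowerOp n x ∈ weightSpace n k (σ - 1) := by
  rw [lowerOp, LinearMap.sum_apply]
  refine Submodule.sum_mem _ fun j hj =>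
    Submodule.smul_mem _ _ (moveOp_mem_supported (fun S hS ha hb => ?_) hx)
  have := insert_erase_mem_weightSubsets hS ha hb (by simp at hj; omega)
  rwa [show σ - (j + 1 : ℕ) + j = σ - 1 by push_cast; ring] at this

theorem raiseOp_lowerOp_sub_single {n : ℕ} {S : Finset ℕ} (hS : S ⊆ range n) (r : ℚ) :
    raiseOp n (lowerOp n (Finsupp.single S r)) - lowerOp n (raiseOp n (Finsupp.single S r)) =
      (∑ i ∈ S, (2 * (i : ℚ) - (n - 1))) • Finsupp.single S r := by
  rw [← Module.End.mul_apply, ← Module.End.mul_apply, ← LinearMap.sub_apply,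
    raiseOp_mul_lowerOp_sub, LinearMap.sum_apply, ← sum_lowerWeight_mul_indicator_sub hS, sum_smul]
  refine sum_congr rfl fun j _ => ?_
  rw [LinearMap.smul_apply, LinearMap.sub_apply, Module.End.mul_apply, Module.End.mul_apply,
    moveOp_moveOp_single (by omega), moveOp_moveOp_single (by omega), mul_smul]
  congr 1
  by_cases h : j ∈ S <;> by_cases h' : j + 1 ∈ S <;> simp [h, h']

theorem raiseOp_lowerOp_sub_of_mem_weightSpace {n k : ℕ} {σ : ℤ} {x : Finset ℕ →₀ ℚ}
    (hx : x ∈ weightSpace n k σ) :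
    raiseOp n (lowerOp n x) - lowerOp n (raiseOp n x) = (2 * σ - k * (n - 1 : ℚ)) • x := by
  suffices weightSpace n k σ ≤
      LinearMap.ker
        (raiseOp n * lowerOp n - lowerOp n * raiseOp n - (2 * σ - k * (n - 1 : ℚ)) • 1) by
    simpa [sub_eq_zero] using this hx
  rw [weightSpace, Finsupp.supported_eq_span_single, Submodule.span_le]
  rintro _ ⟨S, hS, rfl⟩
  simp only [weightSubsets, coe_filter, mem_powersetCard] at hS
  obtain ⟨⟨hsub, hcard⟩, hsum⟩ := hS
  simp only [SetLike.mem_coe, LinearMap.mem_ker, LinearMap.sub_apply, Module.End.mul_apply,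
    raiseOp_lowerOp_sub_single hsub, LinearMap.smul_apply, Module.End.one_apply, ← sub_smul]
  rw [sum_sub_distrib, ← mul_sum, sum_const, hcard, nsmul_eq_mul, ← hsum]
  push_cast
  simp

theorem weightSpace_eq_bot_of_neg (n k : ℕ) {σ : ℤ} (hσ : σ < 0) : weightSpace n k σ = ⊥ := by
  rw [weightSpace, weightSubsets, filter_false_of_mem, coe_empty, Finsupp.supported_empty]
  intro S _ hS
  have : 0 ≤ ∑ i ∈ S, (i : ℤ) := sum_nonneg fun i _ => Int.natCast_nonneg i
  omega

theorem weightSpace_eq_bot_of_lt (n k : ℕ) {σ : ℤ} (hσ : k * ((n : ℤ) - 1) < σ) :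
    weightSpace n k σ = ⊥ := by
  rw [weightSpace, weightSubsets, filter_false_of_mem, coe_empty, Finsupp.supported_empty]
  intro S hS hsum
  rw [mem_powersetCard] at hS
  have : ∑ i ∈ S, (i : ℤ) ≤ ∑ _i ∈ S, ((n : ℤ) - 1) :=
    sum_le_sum fun i hi => by have := mem_range.1 (hS.1 hi); omega
  rw [sum_const, hS.2, nsmul_eq_mul] at this
  omega

instance weightSpace.finite (n k : ℕ) (σ : ℤ) : Module.Finite ℚ (weightSpace n k σ) :=
  Module.Finite.equiv (Finsupp.supportedEquivFinsupp _).symm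

theorem finrank_weightSpace (n k : ℕ) (σ : ℤ) :
    Module.finrank ℚ (weightSpace n k σ) = (weightSubsets n k σ).card := by
  rw [weightSpace, (Finsupp.supportedEquivFinsupp _).finrank_eq, Module.finrank_finsupp_self]
  simp

theorem card_weightSubsets_le_succ {n k : ℕ} {σ : ℤ} (hσ : 2 * σ < k * ((n : ℤ) - 1)) :
    (weightSubsets n k σ).card ≤ (weightSubsets n k (σ + 1)).card := by
  rw [← finrank_weightSpace, ← finrank_weightSpace]
  exact finrank_le_finrank_succ_of_commutator (E := raiseOp n) (F := lowerOp n)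
    (W := weightSpace n k) (fun _ _ => raiseOp_mem_weightSpace)
    (fun _ _ => lowerOp_mem_weightSpace) (fun _ _ => raiseOp_lowerOp_sub_of_mem_weightSpace)
    (fun _ => weightSpace_eq_bot_of_neg n k) (by exact_mod_cast hσ)

theorem card_weightSubsets_le_pred {n k : ℕ} {σ : ℤ} (hσ : k * ((n : ℤ) - 1) < 2 * σ) :
    (weightSubsets n k σ).card ≤ (weightSubsets n k (σ - 1)).card := by
  rw [← finrank_weightSpace, ← finrank_weightSpace]
  exact finrank_le_finrank_pred_of_commutator (E := raiseOp n) (F := lowerOp n)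
    (W := weightSpace n k) (fun _ _ => raiseOp_mem_weightSpace)
    (fun _ _ => lowerOp_mem_weightSpace) (fun _ _ => raiseOp_lowerOp_sub_of_mem_weightSpace)
    (fun _ => weightSpace_eq_bot_of_lt n k) (by exact_mod_cast hσ)

theorem coeff_subsetSumPoly (n k m : ℕ) :
    (subsetSumPoly n k).coeff m = (weightSubsets n k m).card := by
  rw [subsetSumPoly, finsetSum_coeff, weightSubsets, card_filter, Nat.cast_sum]
  refine sum_congr rfl fun S _ => ?_
  have hcast : ∑ i ∈ S, (i : ℤ) = m ↔ m = ∑ i ∈ S, i := by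
    rw [← Nat.cast_sum, Nat.cast_inj, eq_comm]
  simp only [coeff_X_pow, hcast]
  split_ifs <;> rfl

theorem coeff_gaussBinom (n k m : ℕ) :
    (gaussBinom n k).coeff m = (weightSubsets n k (m + k.choose 2 : ℕ)).card := by
  rw [← coeff_subsetSumPoly, ← X_pow_choose_two_mul_gaussBinom, coeff_X_pow_mul]

theorem mul_sub_one_eq_mul_sub_add_two_mul_choose_two {n k : ℕ} (hkn : k ≤ n) :
    (k : ℤ) * (n - 1) = (k * (n - k) : ℕ) + 2 * (k.choose 2 : ℕ) := by
  obtain ⟨d, rfl⟩ := Nat.exists_eq_add_of_le hkn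
  obtain _ | k := k
  · simp
  have he : (k + 1).choose 2 * 2 = (k + 1) * k := by
    rw [Nat.choose_two_right, Nat.div_two_mul_two_of_even (Nat.even_mul_pred_self (k + 1))]
    rfl
  have he' : ((k + 1).choose 2 * 2 : ℤ) = (k + 1) * k := by exact_mod_cast he
  rw [Nat.add_sub_cancel_left]
  push_cast
  linear_combination -he'

theorem gaussBinom_coeff_le_coeff_succ {n k m : ℕ} (hkn : k ≤ n) (hm : 2 * m < k * (n - k)) :
    (gaussBinom n k).coeff m ≤ (gaussBinom n k).coeff (m + 1) := by
  rw [coeff_gaussBinom, coeff_gaussBinom, add_right_comm, Nat.cast_succ]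
  refine Nat.cast_le.2 (card_weightSubsets_le_succ ?_)
  have hm' : (2 * m : ℤ) < (k * (n - k) : ℕ) := by exact_mod_cast hm
  rw [mul_sub_one_eq_mul_sub_add_two_mul_choose_two hkn]
  push_cast at hm' ⊢
  linarith

theorem gaussBinom_coeff_succ_le_coeff {n k m : ℕ} (hkn : k ≤ n)
    (hm : k * (n - k) < 2 * (m + 1)) :
    (gaussBinom n k).coeff (m + 1) ≤ (gaussBinom n k).coeff m := by
  rw [coeff_gaussBinom, coeff_gaussBinom, add_right_comm, Nat.cast_succ]
  refine Nat.cast_le.2 ?_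
  have hm' : ((k * (n - k) : ℕ) : ℤ) < 2 * (m + 1) := by exact_mod_cast hm
  have := card_weightSubsets_le_pred (n := n) (k := k) (σ := (m + k.choose 2 : ℕ) + 1) ?_
  · simpa using this
  rw [mul_sub_one_eq_mul_sub_add_two_mul_choose_two hkn]
  push_cast at hm' ⊢
  linarith

theorem l1normP_eq_sum_of_support_subset {P : ℤ[X]} {s : Finset ℕ} (h : P.support ⊆ s) :
    l1normP P = ∑ j ∈ s, |P.coeff j| :=
  sum_subset h fun j _ hj => by rw [notMem_support_iff.1 hj, abs_zero]

theorem l1normP_sub_le (P Q : ℤ[X]) : l1normP (P - Q) ≤ l1normP P + l1normP Q := by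
  have hsub : (P - Q).support ⊆ P.support ∪ Q.support := by
    simpa only [sub_eq_add_neg, support_neg] using support_add (p := P) (q := -Q)
  rw [l1normP_eq_sum_of_support_subset hsub,
    l1normP_eq_sum_of_support_subset (subset_union_left : P.support ⊆ _),
    l1normP_eq_sum_of_support_subset (subset_union_right : Q.support ⊆ _), ← sum_add_distrib]
  exact sum_le_sum fun j _ => by rw [coeff_sub]; exact abs_sub _ _

theorem l1normP_mul_X_pow (P : ℤ[X]) (m : ℕ) : l1normP (P * X ^ m) = l1normP P := by
  simp [l1normP, support_mul_X_pow, coeff_mul_X_pow]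

theorem l1normP_eq_eval_one {P : ℤ[X]} (h : ∀ m, 0 ≤ P.coeff m) : l1normP P = P.eval 1 := by
  simp [l1normP, eval_eq_sum, Polynomial.sum_def, abs_of_nonneg (h _)]

theorem l1norm_gaussBinom_quotient_general (n k p : ℕ) (hkn : k ≤ n) (hp : 1 ≤ p)
    (A : Polynomial ℤ)
    (hA : A * (1 - Polynomial.X ^ p) = gaussBinom n k * (1 - Polynomial.X)) :
    (p : ℤ) * l1normP A = (n.choose k : ℤ) ∧
    (p : ℤ) * l1normP (gaussBinom n k * (1 - Polynomial.X)) ≤ 2 * (n.choose k : ℤ) := by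
  have hAnn : ∀ m, 0 ≤ A.coeff m :=
    coeff_nonneg_of_mul_one_sub_X_pow_eq_of_unimodal hp hA (N := k * (n - k) / 2)
      (by simp [coeff_gaussBinom]) (fun m hm => gaussBinom_coeff_le_coeff_succ hkn (by omega))
      (fun m hm => gaussBinom_coeff_succ_le_coeff hkn (by omega))
  have hX : (1 - X : ℤ[X]) ≠ 0 := fun h => by simpa [coeff_one] using congrArg (coeff · 1) h
  have hquot : A * ∑ i ∈ range p, X ^ i = gaussBinom n k := by
    refine mul_right_cancel₀ hX ?_
    rw [mul_assoc, geom_sum_mul_neg, hA]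
  have hA1 : (p : ℤ) * l1normP A = n.choose k := by
    rw [l1normP_eq_eval_one hAnn, ← gaussBinom_eval_one, ← hquot]
    simp [mul_comm]
  have hsplit : gaussBinom n k * (1 - X) = A - A * X ^ p := by rw [← hA]; ring
  have hl1 : l1normP (gaussBinom n k * (1 - X)) ≤ 2 * l1normP A := by
    have := l1normP_sub_le A (A * X ^ p)
    rw [l1normP_mul_X_pow] at this
    rw [hsplit]
    linarith
  refine ⟨hA1, ?_⟩
  calc (p : ℤ) * l1normP (gaussBinom n k * (1 - X))
      ≤ p * (2 * l1normP A) := mul_le_mul_of_nonneg_left hl1 (Nat.cast_nonneg p)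
    _ = 2 * n.choose k := by rw [← hA1]; ring

/-- If `A(q) = [n choose k]_q (1 − q)/(1 − q^p)` is a polynomial, then the sum of the
absolute values of its coefficients equals `C(n,k)/p`; consequently the ℓ¹-norm of
`[n choose k]_q · (1 − q)` is at most `(2/p)·C(n,k)`. -/
theorem l1norm_gaussBinom_quotient (n k p : ℕ) (hk : 1 ≤ k) (hkn : k ≤ n) (hp : 1 ≤ p)
    (A : Polynomial ℤ)
    (hA : A * (1 - Polynomial.X ^ p) = gaussBinom n k * (1 - Polynomial.X)) :
    (p : ℤ) * l1normP A = (n.choose k : ℤ) ∧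
    (p : ℤ) * l1normP (gaussBinom n k * (1 - Polynomial.X)) ≤ 2 * (n.choose k : ℤ) :=
  l1norm_gaussBinom_quotient_general n k p hkn hp A hA
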